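/- arXiv:math/0405026 — 4 statements merged into one kernel-verified Lean document; each statement's English description precedes it below -/
import Mathlib

section
/- Let a ∈ ℝ^12 be the coefficient vector of a quadratic system with (p2, q2) ≠ (0, 0). Then the greatest common divisor of p2 and q2 in ℂ[x,y] is a linear form b·x + c·y (i.e., has degree exactly 1) if and only if μ0(a) = 0 and K(a,x,y) is not identically zero. -/
open MvPolynomial Finset

noncomputable section

namespace QSinf

/-!  Coefficient conventions: for `a : Fin 12 → ℝ`,
`a 0 = a00, a 1 = a10, a 2 = a01, a 3 = a20, a 4 = a11, a 5 = a02,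
 a 6 = b00, a 7 = b10, a 8 = b01, a 9 = b20, a 10 = b11, a 11 = b02`,
so that `p = a00 + a10*x + a01*y + a20*x^2 + 2*a11*x*y + a02*y^2` and
`q = b00 + b10*x + b01*y + b20*x^2 + 2*b11*x*y + b02*y^2`. -/

/-- linear part of `p` -/
def p1f (a : Fin 12 → ℝ) (x y : ℝ) : ℝ := a 1 * x + a 2 * y
/-- linear part of `q` -/
def q1f (a : Fin 12 → ℝ) (x y : ℝ) : ℝ := a 7 * x + a 8 * y
/-- quadratic part of `p` -/
def p2f (a : Fin 12 → ℝ) (x y : ℝ) : ℝ := a 3 * x ^ 2 + 2 * a 4 * x * y + a 5 * y ^ 2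
/-- quadratic part of `q` -/
def q2f (a : Fin 12 → ℝ) (x y : ℝ) : ℝ := a 9 * x ^ 2 + 2 * a 10 * x * y + a 11 * y ^ 2
/-- the polynomial `p` -/
def pf (a : Fin 12 → ℝ) (x y : ℝ) : ℝ := a 0 + p1f a x y + p2f a x y
/-- the polynomial `q` -/
def qf (a : Fin 12 → ℝ) (x y : ℝ) : ℝ := a 6 + q1f a x y + q2f a x y

/-- the invariant μ₀ -/
def mu0f (a : Fin 12 → ℝ) : ℝ :=
  (a 3 * a 11 - a 5 * a 9) ^ 2 - 4 * (a 3 * a 10 - a 4 * a 9) * (a 4 * a 11 - a 5 * a 10)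

/-- the comitant `K`, the Jacobian of `(p₂, q₂)` -/
def Kf (a : Fin 12 → ℝ) (x y : ℝ) : ℝ :=
  (2 * a 3 * x + 2 * a 4 * y) * (2 * a 10 * x + 2 * a 11 * y)
    - (2 * a 4 * x + 2 * a 5 * y) * (2 * a 9 * x + 2 * a 10 * y)

/-- the comitant `H`: minus the discriminant (in `x²,xy,y²`-coefficients) of
`α·p₂ + β·q₂` evaluated at `α = y`, `β = -x` -/
def Hf (a : Fin 12 → ℝ) (x y : ℝ) : ℝ :=
  -((2 * (a 4 * y - a 10 * x)) ^ 2 - 4 * (a 3 * y - a 9 * x) * (a 5 * y - a 11 * x))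

/-- the comitant `C₂ = y·p₂ - x·q₂` -/
def C2f (a : Fin 12 → ℝ) (x y : ℝ) : ℝ := y * p2f a x y - x * q2f a x y

/-- coefficient of `x³` in `C₂` -/
def cc0 (a : Fin 12 → ℝ) : ℝ := -(a 9)
/-- coefficient of `x²y` in `C₂` -/
def cc1 (a : Fin 12 → ℝ) : ℝ := a 3 - 2 * a 10
/-- coefficient of `xy²` in `C₂` -/
def cc2 (a : Fin 12 → ℝ) : ℝ := 2 * a 4 - a 11
/-- coefficient of `y³` in `C₂` -/
def cc3 (a : Fin 12 → ℝ) : ℝ := a 5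

/-- the invariant η, the discriminant of the binary cubic `C₂` -/
def etaf (a : Fin 12 → ℝ) : ℝ :=
  (cc1 a) ^ 2 * (cc2 a) ^ 2 - 4 * cc0 a * (cc2 a) ^ 3 - 4 * (cc1 a) ^ 3 * cc3 a
    + 18 * cc0 a * cc1 a * cc2 a * cc3 a - 27 * (cc0 a) ^ 2 * (cc3 a) ^ 2

/-- the comitant `M`, twice the Hessian of `C₂` -/
def Mf (a : Fin 12 → ℝ) (x y : ℝ) : ℝ :=
  2 * ((6 * cc0 a * x + 2 * cc1 a * y) * (2 * cc2 a * x + 6 * cc3 a * y)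
    - (2 * cc1 a * x + 2 * cc2 a * y) ^ 2)

/-- the comitant `L = 2K - 4H - M` -/
def Lf (a : Fin 12 → ℝ) (x y : ℝ) : ℝ := 2 * Kf a x y - 4 * Hf a x y - Mf a x y
/-- the comitant `N = K + H` -/
def Nf (a : Fin 12 → ℝ) (x y : ℝ) : ℝ := Kf a x y + Hf a x y
/-- the comitant `R = L + 8K` -/
def Rf (a : Fin 12 → ℝ) (x y : ℝ) : ℝ := Lf a x y + 8 * Kf a x y
/-- the comitant `K₁ = p₁q₂ - p₂q₁` -/
def K1f (a : Fin 12 → ℝ) (x y : ℝ) : ℝ := p1f a x y * q2f a x y - p2f a x y * q1f a x y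

/-- `p₂` as a polynomial in `ℂ[x,y]` -/
def p2C (a : Fin 12 → ℝ) : MvPolynomial (Fin 2) ℂ :=
  C (a 3 : ℂ) * X 0 ^ 2 + C (2 * a 4 : ℂ) * X 0 * X 1 + C (a 5 : ℂ) * X 1 ^ 2
/-- `q₂` as a polynomial in `ℂ[x,y]` -/
def q2C (a : Fin 12 → ℝ) : MvPolynomial (Fin 2) ℂ :=
  C (a 9 : ℂ) * X 0 ^ 2 + C (2 * a 10 : ℂ) * X 0 * X 1 + C (a 11 : ℂ) * X 1 ^ 2

/-- `d` is a greatest common divisor of `p` and `q` -/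
def IsGcdOf (d p q : MvPolynomial (Fin 2) ℂ) : Prop :=
  d ∣ p ∧ d ∣ q ∧ ∀ e : MvPolynomial (Fin 2) ℂ, e ∣ p → e ∣ q → e ∣ d

/-- the cubic form `C₂` regarded over `ℂ` -/
def C2c (a : Fin 12 → ℝ) (x y : ℂ) : ℂ :=
  (cc0 a : ℂ) * x ^ 3 + (cc1 a : ℂ) * x ^ 2 * y + (cc2 a : ℂ) * x * y ^ 2 + (cc3 a : ℂ) * y ^ 3

/-- the complex linear form `b·x + c·y` is proportional to a real linear form -/
def RealProp (b c : ℂ) : Prop := ∃ (l : ℂ) (r s : ℝ), l ≠ 0 ∧ b = l * (r : ℂ) ∧ c = l * (s : ℂ)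

/-- coefficient vector of the translated system `p(x+α, y+β), q(x+α, y+β)` -/
def rT (a : Fin 12 → ℝ) (α β : ℝ) : Fin 12 → ℝ :=
  ![a 0 + a 1 * α + a 2 * β + a 3 * α ^ 2 + 2 * a 4 * α * β + a 5 * β ^ 2,
    a 1 + 2 * a 3 * α + 2 * a 4 * β,
    a 2 + 2 * a 4 * α + 2 * a 5 * β,
    a 3, a 4, a 5,
    a 6 + a 7 * α + a 8 * β + a 9 * α ^ 2 + 2 * a 10 * α * β + a 11 * β ^ 2,
    a 7 + 2 * a 9 * α + 2 * a 10 * β,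
    a 8 + 2 * a 10 * α + 2 * a 11 * β,
    a 9, a 10, a 11]

/-- binary forms in `x = X 0`, `y = X 1` with real coefficients -/
abbrev R2 := MvPolynomial (Fin 2) ℝ

/-- ∂/∂x -/
def pdx (f : R2) : R2 := pderiv 0 f
/-- ∂/∂y -/
def pdy (f : R2) : R2 := pderiv 1 f
/-- the Jacobian of two binary forms -/
def jacobP (f g : R2) : R2 := pdx f * pdy g - pdy f * pdx g
/-- the second transvectant `(f,g)⁽²⁾` -/
def transv2 (f g : R2) : R2 :=
  pdx (pdx f) * pdy (pdy g) - 2 * pdx (pdy f) * pdx (pdy g) + pdy (pdy f) * pdx (pdx g)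

/-- `p₁` as a binary form -/
def p1P (a : Fin 12 → ℝ) : R2 := C (a 1) * X 0 + C (a 2) * X 1
/-- `q₁` as a binary form -/
def q1P (a : Fin 12 → ℝ) : R2 := C (a 7) * X 0 + C (a 8) * X 1
/-- `p₂` as a binary form -/
def p2P (a : Fin 12 → ℝ) : R2 := C (a 3) * X 0 ^ 2 + C (2 * a 4) * X 0 * X 1 + C (a 5) * X 1 ^ 2
/-- `q₂` as a binary form -/
def q2P (a : Fin 12 → ℝ) : R2 := C (a 9) * X 0 ^ 2 + C (2 * a 10) * X 0 * X 1 + C (a 11) * X 1 ^ 2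
/-- `C₀ = y·p₀ - x·q₀` -/
def C0P (a : Fin 12 → ℝ) : R2 := C (a 0) * X 1 - C (a 6) * X 0
/-- `C₁ = y·p₁ - x·q₁` -/
def C1P (a : Fin 12 → ℝ) : R2 := X 1 * p1P a - X 0 * q1P a
/-- `C₂ = y·p₂ - x·q₂` -/
def C2P (a : Fin 12 → ℝ) : R2 := X 1 * p2P a - X 0 * q2P a
/-- the comitant `K` as a binary form -/
def KP (a : Fin 12 → ℝ) : R2 := jacobP (p2P a) (q2P a)
/-- the comitant `M` (twice the Hessian of `C₂`) as a binary form -/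
def MP (a : Fin 12 → ℝ) : R2 :=
  2 * (pdx (pdx (C2P a)) * pdy (pdy (C2P a)) - (pdx (pdy (C2P a))) ^ 2)
/-- the comitant `H` as a binary form -/
def HP (a : Fin 12 → ℝ) : R2 :=
  -((2 * (C (a 4) * X 1 - C (a 10) * X 0)) ^ 2
    - 4 * (C (a 3) * X 1 - C (a 9) * X 0) * (C (a 5) * X 1 - C (a 11) * X 0))
/-- the comitant `L = 2K - 4H - M` as a binary form -/
def LP (a : Fin 12 → ℝ) : R2 := 2 * KP a - 4 * HP a - MP a
/-- the comitant `K₁ = p₁q₂ - p₂q₁` as a binary form -/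
def K1P (a : Fin 12 → ℝ) : R2 := p1P a * q2P a - p2P a * q1P a
/-- the invariant `D₁ = a10 + b01` -/
def D1v (a : Fin 12 → ℝ) : ℝ := a 1 + a 8
/-- the comitant `D₂ = ∂p₂/∂x + ∂q₂/∂y` -/
def D2P (a : Fin 12 → ℝ) : R2 := pdx (p2P a) + pdy (q2P a)
/-- `J₁ = Jacob(C₀, D₂)` -/
def J1P (a : Fin 12 → ℝ) : R2 := jacobP (C0P a) (D2P a)
/-- `J₂ = Jacob(C₀, C₂)` -/
def J2P (a : Fin 12 → ℝ) : R2 := jacobP (C0P a) (C2P a)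
/-- `J₃ = Discrim(C₁)`: for `C₁ = -b10·x² + (a10-b01)·xy + a01·y²` this is `B² - 4AC` -/
def J3v (a : Fin 12 → ℝ) : ℝ := (a 1 - a 8) ^ 2 + 4 * a 7 * a 2
/-- `J₄ = Jacob(C₁, D₂)` -/
def J4P (a : Fin 12 → ℝ) : R2 := jacobP (C1P a) (D2P a)
/-- the invariant `κ = (M,K)⁽²⁾` (a constant binary form) -/
def kappaP (a : Fin 12 → ℝ) : R2 := transv2 (MP a) (KP a)
/-- the invariant `κ₁ = (M,C₁)⁽²⁾` (a constant binary form) -/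
def kappa1P (a : Fin 12 → ℝ) : R2 := transv2 (MP a) (C1P a)
/-- the invariant `κ₂ = -J₁` -/
def kappa2f (a : Fin 12 → ℝ) : ℝ :=
  -((-(a 6)) * (2 * a 4 + 2 * a 11) - a 0 * (2 * a 3 + 2 * a 10))
/-- `ζ = M - 2K` -/
def zetaP (a : Fin 12 → ℝ) : R2 := MP a - 2 * KP a
/-- the comitant `K₂ = 4·Jacob(J₂,ζ) + 3·Jacob(C₁,ζ)·D₁ - ζ·(16J₁ + 3J₃ + 3D₁²)` -/
def K2P (a : Fin 12 → ℝ) : R2 :=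
  4 * jacobP (J2P a) (zetaP a) + C (3 * D1v a) * jacobP (C1P a) (zetaP a)
    - zetaP a * (16 * J1P a + C (3 * J3v a + 3 * (D1v a) ^ 2))
/-- the comitant `K₃ = 2C₂²(2J₁-3J₃) + C₂(3C₀K - 2C₁J₄) + 2K₁(C₁D₂ + 3K₁)` -/
def K3P (a : Fin 12 → ℝ) : R2 :=
  2 * (C2P a) ^ 2 * (2 * J1P a - C (3 * J3v a))
    + C2P a * (3 * C0P a * KP a - 2 * C1P a * J4P a)
    + 2 * K1P a * (C1P a * D2P a + 3 * K1P a)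

/-- polynomials in the 12 coefficient variables (indices 0–11) and `x = X 12`, `y = X 13` -/
abbrev R14 := MvPolynomial (Fin 14) ℝ

/-- the differential operator `L₁` -/
def L1op (f : R14) : R14 :=
  2 * X 0 * pderiv 1 f + X 1 * pderiv 3 f + C (1/2 : ℝ) * X 2 * pderiv 4 f
    + 2 * X 6 * pderiv 7 f + X 7 * pderiv 9 f + C (1/2 : ℝ) * X 8 * pderiv 10 f
/-- the differential operator `L₂` -/
def L2op (f : R14) : R14 :=
  2 * X 0 * pderiv 2 f + X 2 * pderiv 5 f + C (1/2 : ℝ) * X 1 * pderiv 4 f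
    + 2 * X 6 * pderiv 8 f + X 8 * pderiv 11 f + C (1/2 : ℝ) * X 7 * pderiv 10 f
/-- the differential operator `𝓛 = x·L₂ - y·L₁` -/
def LLop (f : R14) : R14 := X 12 * L2op f - X 13 * L1op f

/-- `μ₀` as an element of `ℝ[a₀₀,…,b₀₂,x,y]` -/
def mu0P : R14 :=
  (X 3 * X 11 - X 5 * X 9) ^ 2 - 4 * (X 3 * X 10 - X 4 * X 9) * (X 4 * X 11 - X 5 * X 10)

/-- `μᵢ = 𝓛⁽ⁱ⁾(μ₀)/i!` -/
def muP (i : ℕ) : R14 := ((i.factorial : ℝ)⁻¹) • (LLop^[i] mu0P)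

/-- evaluation point assigning the coefficients `a` and the values `x`, `y` -/
def evalAt (a : Fin 12 → ℝ) (x y : ℝ) : Fin 14 → ℝ := fun i =>
  if h : (i : ℕ) < 12 then a ⟨(i : ℕ), h⟩ else if (i : ℕ) = 12 then x else y

/-- the value `μᵢ(a, x, y)` -/
def muf (i : ℕ) (a : Fin 12 → ℝ) (x y : ℝ) : ℝ := eval (evalAt a x y) (muP i)

/-- complex evaluation point: coefficients `a` (cast to `ℂ`) and complex values `x`, `y` -/
def evalAtC (a : Fin 12 → ℝ) (x y : ℂ) : Fin 14 → ℂ := fun i =>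
  if h : (i : ℕ) < 12 then ((a ⟨(i : ℕ), h⟩ : ℝ) : ℂ) else if (i : ℕ) = 12 then x else y

/-- the value of `μᵢ` extended to complex arguments -/
def mufC (i : ℕ) (a : Fin 12 → ℝ) (x y : ℂ) : ℂ := aeval (evalAtC a x y) (muP i)

/-- the homogenization `P(X,Y,Z) = Z²·p(X/Z,Y/Z)` over `ℂ` -/
def PfC (a : Fin 12 → ℝ) (Xv Yv Zv : ℂ) : ℂ :=
  (a 0 : ℂ) * Zv ^ 2 + ((a 1 : ℂ) * Xv + (a 2 : ℂ) * Yv) * Zv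
    + ((a 3 : ℂ) * Xv ^ 2 + 2 * (a 4 : ℂ) * Xv * Yv + (a 5 : ℂ) * Yv ^ 2)
/-- the homogenization `Q(X,Y,Z) = Z²·q(X/Z,Y/Z)` over `ℂ` -/
def QfC (a : Fin 12 → ℝ) (Xv Yv Zv : ℂ) : ℂ :=
  (a 6 : ℂ) * Zv ^ 2 + ((a 7 : ℂ) * Xv + (a 8 : ℂ) * Yv) * Zv
    + ((a 9 : ℂ) * Xv ^ 2 + 2 * (a 10 : ℂ) * Xv * Yv + (a 11 : ℂ) * Yv ^ 2)

/-- `b` is the coefficient vector `r_g(a)` of the system transformed by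
`g ∈ GL(2,ℝ)` with matrix `m` and inverse matrix `n`:
`(p̃,q̃)(x̃,ỹ) = m·(p,q)(g⁻¹(x̃,ỹ))`. -/
def IsTransformed (m n : Matrix (Fin 2) (Fin 2) ℝ) (a b : Fin 12 → ℝ) : Prop :=
  m * n = 1 ∧ ∀ x y : ℝ,
    pf b x y = m 0 0 * pf a (n 0 0 * x + n 0 1 * y) (n 1 0 * x + n 1 1 * y)
               + m 0 1 * qf a (n 0 0 * x + n 0 1 * y) (n 1 0 * x + n 1 1 * y)
    ∧ qf b x y = m 1 0 * pf a (n 0 0 * x + n 0 1 * y) (n 1 0 * x + n 1 1 * y)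
               + m 1 1 * qf a (n 0 0 * x + n 0 1 * y) (n 1 0 * x + n 1 1 * y)

/-- `(P2, Q2)` is the pair of degree-2 homogeneous parts of the system transformed by
`g ∈ GL(2,ℝ)` with matrix `m` and inverse matrix `n`. -/
def Quad2Transformed (m n : Matrix (Fin 2) (Fin 2) ℝ) (a : Fin 12 → ℝ)
    (P2 Q2 : ℝ → ℝ → ℝ) : Prop :=
  m * n = 1 ∧ ∀ x y : ℝ,
    P2 x y = m 0 0 * p2f a (n 0 0 * x + n 0 1 * y) (n 1 0 * x + n 1 1 * y)
               + m 0 1 * q2f a (n 0 0 * x + n 0 1 * y) (n 1 0 * x + n 1 1 * y)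
    ∧ Q2 x y = m 1 0 * p2f a (n 0 0 * x + n 0 1 * y) (n 1 0 * x + n 1 1 * y)
               + m 1 1 * q2f a (n 0 0 * x + n 0 1 * y) (n 1 0 * x + n 1 1 * y)


abbrev MP2 := MvPolynomial (Fin 2) ℂ

lemma primeX0 : Prime (X 0 : MP2) := by
  rw [← MulEquiv.prime_iff (finSuccEquiv ℂ 1).toMulEquiv]
  have h : (finSuccEquiv ℂ 1).toMulEquiv (X 0) = Polynomial.X := finSuccEquiv_X_zero
  rw [h]; exact Polynomial.prime_X

lemma X0_ndvd_X1 : ¬ (X 0 : MP2) ∣ X 1 := by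
  rintro ⟨g, hg⟩
  have h := congrArg (eval ![0, 1]) hg
  simp at h

lemma dvd_of_dvd_mulX {e L : MP2} (hL : L ≠ 0)
    (h0 : e ∣ L * X 0) (h1 : e ∣ L * X 1) : e ∣ L := by
  obtain ⟨s, hs⟩ := h0
  obtain ⟨t, ht⟩ := h1
  have hxt : X 1 * s = X 0 * t := by
    apply mul_left_cancel₀ hL
    calc L * (X 1 * s) = (L * X 1) * s := by ring
    _ = (e * t) * s := by rw [ht]
    _ = (e * s) * t := by ring
    _ = (L * X 0) * t := by rw [hs]
    _ = L * (X 0 * t) := by ring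
  have hdvd : (X 0 : MP2) ∣ s := by
    rcases primeX0.2.2 (X 1) s ⟨t, hxt⟩ with h | h
    · exact absurd h X0_ndvd_X1
    · exact h
  obtain ⟨s', hs'⟩ := hdvd
  refine ⟨s', mul_left_cancel₀ (X_ne_zero (R := ℂ) 0) ?_⟩
  calc (X 0 : MP2) * L = L * X 0 := by ring
  _ = e * (X 0 * s') := by rw [hs, hs']
  _ = X 0 * (e * s') := by ring

lemma coeff_one_Xsq_mul (z : ℂ) (g : Polynomial ℂ) :
    (Polynomial.C z * Polynomial.X ^ 2 * g).coeff 1 = 0 := by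
  have h : Polynomial.C z * Polynomial.X ^ 2 * g
      = Polynomial.X * (Polynomial.X * (Polynomial.C z * g)) := by ring
  rw [h, show (1 : ℕ) = 0 + 1 from rfl, Polynomial.coeff_X_mul, Polynomial.mul_coeff_zero,
    Polynomial.coeff_X_zero, zero_mul]

lemma dvd_quad_linear (p q r b c : ℂ)
    (h : (C p * X 0 ^ 2 + C q * X 0 * X 1 + C r * X 1 ^ 2 : MP2) ∣ C b * X 0 + C c * X 1) :
    b = 0 ∧ c = 0 := by
  obtain ⟨w, hw⟩ := h
  have key : ∀ s t : ℂ, b * s + c * t = 0 := by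
    intro s t
    have h2 := congrArg (aeval (R := ℂ)
      ![Polynomial.C s * Polynomial.X, Polynomial.C t * Polynomial.X]) hw
    simp only [map_add, map_mul, map_pow, aeval_X, aeval_C, Polynomial.algebraMap_eq,
      Matrix.cons_val_zero, Matrix.cons_val_one, Matrix.head_cons] at h2
    have h2' : Polynomial.C (b * s + c * t) * Polynomial.X
        = Polynomial.C (p * s ^ 2 + q * s * t + r * t ^ 2) * Polynomial.X ^ 2
          * (aeval ![Polynomial.C s * Polynomial.X, Polynomial.C t * Polynomial.X]) w := by
      simp only [map_add, map_mul, map_pow]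
      linear_combination h2
    calc b * s + c * t = (Polynomial.C (b * s + c * t) * Polynomial.X).coeff 1 := by simp
    _ = 0 := by rw [h2']; exact coeff_one_Xsq_mul _ _
  exact ⟨by simpa using key 1 0, by simpa using key 0 1⟩

lemma factor_b (p q r b c : ℂ) (hroot : p * c ^ 2 - 2 * q * c * b + r * b ^ 2 = 0) :
    C (b ^ 2) * (C p * X 0 ^ 2 + C (2 * q) * X 0 * X 1 + C r * X 1 ^ 2 : MP2)
      = (C b * X 0 + C c * X 1) * (C (p * b) * X 0 + C (2 * q * b - p * c) * X 1) := by
  have hC : (C (p * c ^ 2 - 2 * q * c * b + r * b ^ 2) : MP2) = C 0 := congrArg C hroot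
  simp only [map_sub, map_add, map_mul, map_pow, map_ofNat, map_zero] at hC ⊢
  linear_combination (X 1 ^ 2 : MP2) * hC

lemma combo_dvd (α β γ δ : ℂ) (e L : MP2)
    (h1 : e ∣ L * (C α * X 0 + C β * X 1)) (h2 : e ∣ L * (C γ * X 0 + C δ * X 1)) :
    e ∣ C (α * δ - β * γ) * (L * X 0) ∧ e ∣ C (α * δ - β * γ) * (L * X 1) := by
  constructor
  · have hd := dvd_sub (h1.mul_left (C δ)) (h2.mul_left (C β))
    have heq : C δ * (L * (C α * X 0 + C β * X 1)) - C β * (L * (C γ * X 0 + C δ * X 1))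
        = C (α * δ - β * γ) * (L * X 0) := by
      simp only [map_sub, map_mul]; ring
    rwa [heq] at hd
  · have hd := dvd_sub (h2.mul_left (C α)) (h1.mul_left (C γ))
    have heq : C α * (L * (C γ * X 0 + C δ * X 1)) - C γ * (L * (C α * X 0 + C β * X 1))
        = C (α * δ - β * γ) * (L * X 1) := by
      simp only [map_sub, map_mul]; ring
    rwa [heq] at hd

lemma dvd_of_C_mul_dvd {z : ℂ} (hz : z ≠ 0) {e f : MP2} (h : e ∣ C z * f) : e ∣ f := by
  have : f = C z⁻¹ * (C z * f) := by
    rw [← mul_assoc, ← map_mul, inv_mul_cancel₀ hz, map_one, one_mul]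
  rw [this]
  exact h.mul_left _


lemma eval_p2C (a : Fin 12 → ℝ) (u v : ℂ) :
    eval ![u, v] (p2C a) = (a 3 : ℂ) * u ^ 2 + 2 * (a 4 : ℂ) * u * v + (a 5 : ℂ) * v ^ 2 := by
  simp [p2C]

lemma eval_q2C (a : Fin 12 → ℝ) (u v : ℂ) :
    eval ![u, v] (q2C a) = (a 9 : ℂ) * u ^ 2 + 2 * (a 10 : ℂ) * u * v + (a 11 : ℂ) * v ^ 2 := by
  simp [q2C]


/-- For a quadratic system with `(p₂,q₂) ≠ (0,0)`, the gcd of `p₂` and `q₂`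
in `ℂ[x,y]` is a linear form `b·x + c·y` iff `μ₀(a) = 0` and `K` is not identically zero. -/
theorem gcd_linear_iff (a : Fin 12 → ℝ) (h : ¬(p2C a = 0 ∧ q2C a = 0)) :
    (∃ b c : ℂ, ¬(b = 0 ∧ c = 0) ∧ IsGcdOf (C b * X 0 + C c * X 1) (p2C a) (q2C a)) ↔
      (mu0f a = 0 ∧ ∃ x y : ℝ, Kf a x y ≠ 0) := by
  constructor
  · rintro ⟨b, c, hbc, hd1, hd2, hmax⟩
    have hmu : mu0f a = 0 := by
      obtain ⟨w1, hw1⟩ := hd1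
      obtain ⟨w2, hw2⟩ := hd2
      have hluv : eval ![c, -b] (C b * X 0 + C c * X 1 : MP2) = 0 := by
        simp; ring
      have hp : (a 3 : ℂ) * c ^ 2 + 2 * (a 4 : ℂ) * c * (-b) + (a 5 : ℂ) * (-b) ^ 2 = 0 := by
        rw [← eval_p2C, hw1, map_mul, hluv, zero_mul]
      have hq : (a 9 : ℂ) * c ^ 2 + 2 * (a 10 : ℂ) * c * (-b) + (a 11 : ℂ) * (-b) ^ 2 = 0 := by
        rw [← eval_q2C, hw2, map_mul, hluv, zero_mul]
      obtain ⟨u, hu_def⟩ : ∃ x : ℂ, x = c := ⟨_, rfl⟩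
      obtain ⟨v, hv_def⟩ : ∃ x : ℂ, x = -b := ⟨_, rfl⟩
      rw [← hu_def, ← hv_def] at hp hq
      obtain ⟨M1, hM1⟩ : ∃ x : ℂ, x = (a 3 : ℂ) * (a 10 : ℂ) - (a 4 : ℂ) * (a 9 : ℂ) := ⟨_, rfl⟩
      obtain ⟨M2, hM2⟩ : ∃ x : ℂ, x = (a 3 : ℂ) * (a 11 : ℂ) - (a 5 : ℂ) * (a 9 : ℂ) := ⟨_, rfl⟩
      obtain ⟨M3, hM3⟩ : ∃ x : ℂ, x = (a 4 : ℂ) * (a 11 : ℂ) - (a 5 : ℂ) * (a 10 : ℂ) := ⟨_, rfl⟩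
      have R1 : v * (2 * M1 * u + M2 * v) = 0 := by
        rw [hM1, hM2]
        linear_combination (a 3 : ℂ) * hq - (a 9 : ℂ) * hp
      have R2 : u * (M2 * u + 2 * M3 * v) = 0 := by
        rw [hM2, hM3]
        linear_combination (a 11 : ℂ) * hp - (a 5 : ℂ) * hq
      have R3 : M1 * u ^ 2 - M3 * v ^ 2 = 0 := by
        rw [hM1, hM3]
        linear_combination (a 10 : ℂ) * hp - (a 4 : ℂ) * hq
      have hM : M2 ^ 2 - 4 * M1 * M3 = 0 := by
        by_cases hu : u = 0
        · have hv : v ≠ 0 := by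
            rcases not_and_or.mp hbc with hb | hc
            · rw [hv_def]; exact neg_ne_zero.mpr hb
            · exact absurd (hu_def ▸ hu) hc
          have h2 : M2 * v ^ 2 = 0 := by linear_combination R1 - (2 * M1 * v) * hu
          have hm2 : M2 = 0 := (mul_eq_zero.mp h2).resolve_right (pow_ne_zero 2 hv)
          have h3 : M3 * v ^ 2 = 0 := by linear_combination (M1 * u) * hu - R3
          have hm3 : M3 = 0 := (mul_eq_zero.mp h3).resolve_right (pow_ne_zero 2 hv)
          linear_combination M2 * hm2 - 4 * M1 * hm3
        · by_cases hv : v = 0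
          · have h2 : M2 * u ^ 2 = 0 := by linear_combination R2 - (2 * M3 * u) * hv
            have hm2 : M2 = 0 := (mul_eq_zero.mp h2).resolve_right (pow_ne_zero 2 hu)
            have h1 : M1 * u ^ 2 = 0 := by linear_combination R3 + (M3 * v) * hv
            have hm1 : M1 = 0 := (mul_eq_zero.mp h1).resolve_right (pow_ne_zero 2 hu)
            linear_combination M2 * hm2 - 4 * M3 * hm1
          · have e1 : 2 * M1 * u + M2 * v = 0 := (mul_eq_zero.mp R1).resolve_left hv
            have e2 : M2 * u + 2 * M3 * v = 0 := (mul_eq_zero.mp R2).resolve_left hu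
            have key : (M2 ^ 2 - 4 * M1 * M3) * (u * v) = 0 := by
              linear_combination (-2 * M3 * v) * e1 + (M2 * v) * e2
            exact (mul_eq_zero.mp key).resolve_right (mul_ne_zero hu hv)
      rw [hM1, hM2, hM3] at hM
      rw [← Complex.ofReal_eq_zero]
      simp only [mu0f]
      push_cast
      linear_combination hM
    refine ⟨hmu, ?_⟩
    by_contra hK
    push_neg at hK
    have hm1 : a 3 * a 10 - a 4 * a 9 = 0 := by
      have h0 := hK 1 0; simp only [Kf] at h0; linear_combination h0 / 4
    have hm3 : a 4 * a 11 - a 5 * a 10 = 0 := by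
      have h0 := hK 0 1; simp only [Kf] at h0; linear_combination h0 / 4
    have hm2 : a 3 * a 11 - a 5 * a 9 = 0 := by
      have h0 := hK 1 1; simp only [Kf] at h0; linear_combination h0 / 4 - hm1 - hm3
    rcases not_and_or.mp h with hp2 | hq2
    · have h345 : ¬(a 3 = 0 ∧ a 4 = 0 ∧ a 5 = 0) := by
        rintro ⟨h3, h4, h5⟩
        exact hp2 (by simp [p2C, h3, h4, h5])
      obtain ⟨l, hl9, hl10, hl11⟩ :
          ∃ l : ℝ, a 9 = l * a 3 ∧ a 10 = l * a 4 ∧ a 11 = l * a 5 := by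
        by_cases h3 : a 3 = 0
        · by_cases h4 : a 4 = 0
          · have h5 : a 5 ≠ 0 := fun h5 => h345 ⟨h3, h4, h5⟩
            refine ⟨a 11 / a 5, ?_, ?_, by field_simp⟩
            · rw [h3, mul_zero]
              have h9 : a 5 * a 9 = 0 := by linear_combination -hm2 + a 11 * h3
              exact (mul_eq_zero.mp h9).resolve_left h5
            · rw [h4, mul_zero]
              have h10 : a 5 * a 10 = 0 := by linear_combination -hm3 + a 11 * h4
              exact (mul_eq_zero.mp h10).resolve_left h5
          · refine ⟨a 10 / a 4, ?_, by field_simp, ?_⟩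
            · rw [h3, mul_zero]
              have h9 : a 4 * a 9 = 0 := by linear_combination -hm1 + a 10 * h3
              exact (mul_eq_zero.mp h9).resolve_left h4
            · rw [div_mul_eq_mul_div, eq_comm, div_eq_iff h4]
              linear_combination -hm3
        · refine ⟨a 9 / a 3, by field_simp, ?_, ?_⟩
          · rw [div_mul_eq_mul_div, eq_comm, div_eq_iff h3]
            linear_combination -hm1
          · rw [div_mul_eq_mul_div, eq_comm, div_eq_iff h3]
            linear_combination -hm2
      have hq2e : q2C a = p2C a * C ((l : ℝ) : ℂ) := by
        simp only [p2C, q2C, hl9, hl10, hl11]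
        push_cast
        simp only [map_mul, map_ofNat]
        ring
      have hdl : p2C a ∣ (C b * X 0 + C c * X 1 : MP2) := hmax _ dvd_rfl ⟨_, hq2e⟩
      exact hbc (dvd_quad_linear (a 3 : ℂ) (2 * (a 4 : ℂ)) (a 5 : ℂ) b c hdl)
    · have h91011 : ¬(a 9 = 0 ∧ a 10 = 0 ∧ a 11 = 0) := by
        rintro ⟨h9, h10, h11⟩
        exact hq2 (by simp [q2C, h9, h10, h11])
      obtain ⟨l, hl3, hl4, hl5⟩ :
          ∃ l : ℝ, a 3 = l * a 9 ∧ a 4 = l * a 10 ∧ a 5 = l * a 11 := by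
        by_cases h9 : a 9 = 0
        · by_cases h10 : a 10 = 0
          · have h11 : a 11 ≠ 0 := fun h11 => h91011 ⟨h9, h10, h11⟩
            refine ⟨a 5 / a 11, ?_, ?_, by field_simp⟩
            · rw [h9, mul_zero]
              have h3 : a 11 * a 3 = 0 := by linear_combination hm2 + a 5 * h9
              exact (mul_eq_zero.mp h3).resolve_left h11
            · rw [h10, mul_zero]
              have h4 : a 11 * a 4 = 0 := by linear_combination hm3 + a 5 * h10
              exact (mul_eq_zero.mp h4).resolve_left h11
          · refine ⟨a 4 / a 10, ?_, by field_simp, ?_⟩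
            · rw [h9, mul_zero]
              have h3 : a 10 * a 3 = 0 := by linear_combination hm1 + a 4 * h9
              exact (mul_eq_zero.mp h3).resolve_left h10
            · rw [div_mul_eq_mul_div, eq_comm, div_eq_iff h10]
              linear_combination hm3
        · refine ⟨a 3 / a 9, by field_simp, ?_, ?_⟩
          · rw [div_mul_eq_mul_div, eq_comm, div_eq_iff h9]
            linear_combination hm1
          · rw [div_mul_eq_mul_div, eq_comm, div_eq_iff h9]
            linear_combination hm2
      have hp2e : p2C a = q2C a * C ((l : ℝ) : ℂ) := by
        simp only [p2C, q2C, hl3, hl4, hl5]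
        push_cast
        simp only [map_mul, map_ofNat]
        ring
      have hdl : q2C a ∣ (C b * X 0 + C c * X 1 : MP2) := hmax _ ⟨_, hp2e⟩ dvd_rfl
      exact hbc (dvd_quad_linear (a 9 : ℂ) (2 * (a 10 : ℂ)) (a 11 : ℂ) b c hdl)
  · rintro ⟨hmu, x0, y0, hK⟩
    have hmu' : (a 3 * a 11 - a 5 * a 9) ^ 2
        - 4 * (a 3 * a 10 - a 4 * a 9) * (a 4 * a 11 - a 5 * a 10) = 0 := hmu
    by_cases hm1 : a 3 * a 10 - a 4 * a 9 = 0
    · have hm2 : a 3 * a 11 - a 5 * a 9 = 0 := by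
        have hsq : (a 3 * a 11 - a 5 * a 9) ^ 2 = 0 := by
          linear_combination hmu' + 4 * (a 4 * a 11 - a 5 * a 10) * hm1
        exact pow_eq_zero_iff two_ne_zero |>.mp hsq
      have hm3 : a 4 * a 11 - a 5 * a 10 ≠ 0 := by
        intro h3
        apply hK
        simp only [Kf]
        linear_combination (4 * x0 ^ 2) * hm1 + (4 * x0 * y0) * hm2 + (4 * y0 ^ 2) * h3
      have ha3 : a 3 = 0 := by
        have key : a 3 * (a 4 * a 11 - a 5 * a 10) = 0 := by
          linear_combination (a 4) * hm2 - (a 5) * hm1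
        exact (mul_eq_zero.mp key).resolve_right hm3
      have ha9 : a 9 = 0 := by
        have key : a 9 * (a 4 * a 11 - a 5 * a 10) = 0 := by
          linear_combination (a 10) * hm2 - (a 11) * hm1
        exact (mul_eq_zero.mp key).resolve_right hm3
      have hL : (C (0 : ℂ) * X 0 + C (1 : ℂ) * X 1 : MP2) = X 1 := by simp
      have key1 : p2C a = X 1 * (C (2 * (a 4 : ℂ)) * X 0 + C ((a 5 : ℂ)) * X 1) := by
        simp only [p2C, ha3, Complex.ofReal_zero, map_zero, zero_mul, zero_add]
        ring
      have key2 : q2C a = X 1 * (C (2 * (a 10 : ℂ)) * X 0 + C ((a 11 : ℂ)) * X 1) := by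
        simp only [q2C, ha9, Complex.ofReal_zero, map_zero, zero_mul, zero_add]
        ring
      refine ⟨0, 1, by simp, ?_, ?_, ?_⟩
      · rw [hL]; exact ⟨_, key1⟩
      · rw [hL]; exact ⟨_, key2⟩
      · intro e he1 he2
        rw [hL]
        rw [key1] at he1
        rw [key2] at he2
        obtain ⟨c0, c1⟩ := combo_dvd (2 * (a 4 : ℂ)) ((a 5 : ℂ)) (2 * (a 10 : ℂ))
          ((a 11 : ℂ)) e (X 1) he1 he2
        have hD : (2 * (a 4 : ℂ)) * (a 11 : ℂ) - (a 5 : ℂ) * (2 * (a 10 : ℂ)) ≠ 0 := by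
          intro hD0
          apply hm3
          have hcast : ((2 * (a 4 * a 11 - a 5 * a 10) : ℝ) : ℂ) = 0 := by
            push_cast; linear_combination hD0
          have h2 : (2 : ℝ) * (a 4 * a 11 - a 5 * a 10) = 0 := by exact_mod_cast hcast
          linarith
        exact dvd_of_dvd_mulX (X_ne_zero 1) (dvd_of_C_mul_dvd hD c0) (dvd_of_C_mul_dvd hD c1)
    · obtain ⟨b, hbdef⟩ : ∃ x : ℂ, x = ((2 * (a 3 * a 10 - a 4 * a 9) : ℝ) : ℂ) := ⟨_, rfl⟩
      obtain ⟨cc, hcdef⟩ : ∃ x : ℂ, x = ((a 3 * a 11 - a 5 * a 9 : ℝ) : ℂ) := ⟨_, rfl⟩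
      have hbne : b ≠ 0 := by
        rw [hbdef]
        simp only [ne_eq, Complex.ofReal_eq_zero]
        intro h0; apply hm1; linarith
      have hrp : (a 3 : ℂ) * cc ^ 2 - 2 * (a 4 : ℂ) * cc * b + (a 5 : ℂ) * b ^ 2 = 0 := by
        rw [hbdef, hcdef]
        have hr : a 3 * (a 3 * a 11 - a 5 * a 9) ^ 2
            - 2 * a 4 * (a 3 * a 11 - a 5 * a 9) * (2 * (a 3 * a 10 - a 4 * a 9))
            + a 5 * (2 * (a 3 * a 10 - a 4 * a 9)) ^ 2 = 0 := by
          linear_combination (a 3) * hmu'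
        have := congrArg (fun r : ℝ => (r : ℂ)) hr
        push_cast at this ⊢
        linear_combination this
      have hrq : (a 9 : ℂ) * cc ^ 2 - 2 * (a 10 : ℂ) * cc * b + (a 11 : ℂ) * b ^ 2 = 0 := by
        rw [hbdef, hcdef]
        have hr : a 9 * (a 3 * a 11 - a 5 * a 9) ^ 2
            - 2 * a 10 * (a 3 * a 11 - a 5 * a 9) * (2 * (a 3 * a 10 - a 4 * a 9))
            + a 11 * (2 * (a 3 * a 10 - a 4 * a 9)) ^ 2 = 0 := by
          linear_combination (a 9) * hmu'
        have := congrArg (fun r : ℝ => (r : ℂ)) hr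
        push_cast at this ⊢
        linear_combination this
      have key1 : C (b ^ 2) * p2C a
          = (C b * X 0 + C cc * X 1)
            * (C ((a 3 : ℂ) * b) * X 0 + C (2 * (a 4 : ℂ) * b - (a 3 : ℂ) * cc) * X 1) := by
        have hfb := factor_b (a 3 : ℂ) (a 4 : ℂ) (a 5 : ℂ) b cc hrp
        rw [show p2C a = (C (a 3 : ℂ) * X 0 ^ 2 + C (2 * (a 4 : ℂ)) * X 0 * X 1
          + C ((a 5 : ℂ)) * X 1 ^ 2 : MP2) from rfl]
        exact hfb
      have key2 : C (b ^ 2) * q2C a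
          = (C b * X 0 + C cc * X 1)
            * (C ((a 9 : ℂ) * b) * X 0 + C (2 * (a 10 : ℂ) * b - (a 9 : ℂ) * cc) * X 1) := by
        have hfb := factor_b (a 9 : ℂ) (a 10 : ℂ) (a 11 : ℂ) b cc hrq
        rw [show q2C a = (C (a 9 : ℂ) * X 0 ^ 2 + C (2 * (a 10 : ℂ)) * X 0 * X 1
          + C ((a 11 : ℂ)) * X 1 ^ 2 : MP2) from rfl]
        exact hfb
      have hb2 : b ^ 2 ≠ 0 := pow_ne_zero 2 hbne
      refine ⟨b, cc, fun hh => hbne hh.1, ?_, ?_, ?_⟩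
      · exact dvd_of_C_mul_dvd hb2 ⟨_, key1⟩
      · exact dvd_of_C_mul_dvd hb2 ⟨_, key2⟩
      · intro e he1 he2
        have he1' : e ∣ (C b * X 0 + C cc * X 1)
            * (C ((a 3 : ℂ) * b) * X 0 + C (2 * (a 4 : ℂ) * b - (a 3 : ℂ) * cc) * X 1) := by
          rw [← key1]; exact he1.mul_left _
        have he2' : e ∣ (C b * X 0 + C cc * X 1)
            * (C ((a 9 : ℂ) * b) * X 0 + C (2 * (a 10 : ℂ) * b - (a 9 : ℂ) * cc) * X 1) := by
          rw [← key2]; exact he2.mul_left _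
        obtain ⟨c0, c1⟩ := combo_dvd ((a 3 : ℂ) * b) (2 * (a 4 : ℂ) * b - (a 3 : ℂ) * cc)
          ((a 9 : ℂ) * b) (2 * (a 10 : ℂ) * b - (a 9 : ℂ) * cc) e (C b * X 0 + C cc * X 1)
          he1' he2'
        have hDval : (a 3 : ℂ) * b * (2 * (a 10 : ℂ) * b - (a 9 : ℂ) * cc)
            - (2 * (a 4 : ℂ) * b - (a 3 : ℂ) * cc) * ((a 9 : ℂ) * b)
            = ((8 * (a 3 * a 10 - a 4 * a 9) ^ 3 : ℝ) : ℂ) := by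
          rw [hbdef, hcdef]; push_cast; ring
        have hD : (a 3 : ℂ) * b * (2 * (a 10 : ℂ) * b - (a 9 : ℂ) * cc)
            - (2 * (a 4 : ℂ) * b - (a 3 : ℂ) * cc) * ((a 9 : ℂ) * b) ≠ 0 := by
          rw [hDval]
          simp only [ne_eq, Complex.ofReal_eq_zero]
          intro h0
          apply hm1
          have h8 : (a 3 * a 10 - a 4 * a 9) ^ 3 = 0 := by linarith
          exact pow_eq_zero_iff three_ne_zero |>.mp h8
        have hLne : (C b * X 0 + C cc * X 1 : MP2) ≠ 0 := by
          intro h0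
          have hev := congrArg (eval ![1, 0]) h0
          simp at hev
          exact hbne hev
        exact dvd_of_dvd_mulX hLne (dvd_of_C_mul_dvd hD c0) (dvd_of_C_mul_dvd hD c1)
end QSinf
end
end

section
/- Let a ∈ ℝ^12 be the coefficient vector of a quadratic system with (p2, q2) ≠ (0, 0). Then the greatest common divisor of p2 and q2 in ℂ[x,y] is the square (b·x + c·y)² of a single linear form if and only if μ0(a) = 0, K(a,x,y) is identically zero, and H(a,x,y) is identically zero. -/
open MvPolynomial Finset

noncomputable section

namespace QSinf

/-!
If `(b x + c y)²` divides the binary quadratics `p₂` and `q₂`, then for degree reasons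
`p₂ = l (b x + c y)²` and `q₂ = m (b x + c y)²`, and `μ₀`, `K`, `H` vanish identically in
`l, m, b, c`. Conversely, `K ≡ 0` says that the coefficient vectors of `p₂` and `q₂` are
proportional, and `H ≡ 0` at `(1, 0)` and `(0, 1)` says that both have zero discriminant; so
both are multiples of a single square `(b x + c y)²`, which is then their gcd because one of
the two multiples is by a nonzero constant.
-/

def quadForm {K : Type*} [CommRing K] (A B D : K) : MvPolynomial (Fin 2) K :=
  C A * X 0 ^ 2 + C (2 * B) * X 0 * X 1 + C D * X 1 ^ 2

def linForm {K : Type*} [CommRing K] (b c : K) : MvPolynomial (Fin 2) K :=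
  C b * X 0 + C c * X 1

lemma p2C_eq_quadForm (a : Fin 12 → ℝ) : p2C a = quadForm (a 3 : ℂ) (a 4) (a 5) := rfl

lemma q2C_eq_quadForm (a : Fin 12 → ℝ) : q2C a = quadForm (a 9 : ℂ) (a 10) (a 11) := rfl

lemma exists_eq_smul_of_mul_comm {ι K : Type*} [Field K] {u w : ι → K} (hu : u ≠ 0)
    (h : ∀ i j, u i * w j = u j * w i) : ∃ t : K, w = t • u := by
  obtain ⟨k, hk⟩ := Function.ne_iff.mp hu
  refine ⟨w k / u k, funext fun j => ?_⟩
  simp only [Pi.smul_apply, smul_eq_mul, Pi.zero_apply] at hk ⊢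
  field_simp
  linear_combination h k j

lemma exists_eq_C_mul_of_dvd_of_totalDegree_le {σ R : Type*} [CommRing R] [IsDomain R]
    {d f : MvPolynomial σ R} (hd : d ≠ 0) (hdf : d ∣ f) (hdeg : f.totalDegree ≤ d.totalDegree) :
    ∃ l, f = C l * d := by
  obtain ⟨u, rfl⟩ := hdf
  rcases eq_or_ne u 0 with rfl | hu
  · exact ⟨0, by simp⟩
  rw [totalDegree_mul_of_isDomain hd hu] at hdeg
  have hu0 : u.totalDegree = 0 := by omega
  exact ⟨u.coeff 0, by rw [mul_comm, ← totalDegree_eq_zero_iff_eq_C.mp hu0]⟩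

section Field

variable {K : Type*} [Field K]

lemma linForm_ne_zero {b c : K} (hbc : ¬(b = 0 ∧ c = 0)) : linForm b c ≠ 0 := by
  intro h
  have h10 := congrArg (eval ![1, 0]) h
  have h01 := congrArg (eval ![0, 1]) h
  simp only [linForm, map_add, map_mul, eval_C, eval_X, Matrix.cons_val_zero,
    Matrix.cons_val_one, Matrix.cons_val_fin_one, mul_one, mul_zero, add_zero, zero_add,
    map_zero] at h10 h01
  exact hbc ⟨h10, h01⟩

lemma totalDegree_linForm_sq {b c : K} (hbc : ¬(b = 0 ∧ c = 0)) :
    (linForm b c ^ 2).totalDegree = 2 :=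
  (((isHomogeneous_C_mul_X b 0).add (isHomogeneous_C_mul_X c 1)).pow 2).totalDegree
    (pow_ne_zero 2 (linForm_ne_zero hbc))

lemma totalDegree_quadForm_le (A B D : K) : (quadForm A B D).totalDegree ≤ 2 :=
  IsHomogeneous.totalDegree_le <|
    ((isHomogeneous_C_mul_X_pow A 0 2).add ((isHomogeneous_C_mul_X (2 * B) 0).mul
      (isHomogeneous_X K 1))).add (isHomogeneous_C_mul_X_pow D 1 2)

variable [NeZero (2 : K)]

lemma quadForm_eq_C_mul_linForm_sq_iff {A B D b c l : K} :
    quadForm A B D = C l * linForm b c ^ 2 ↔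
      A = l * b ^ 2 ∧ B = l * (b * c) ∧ D = l * c ^ 2 := by
  constructor
  · intro h
    have h10 := congrArg (eval ![1, 0]) h
    have h01 := congrArg (eval ![0, 1]) h
    have h11 := congrArg (eval ![1, 1]) h
    simp only [quadForm, linForm, map_add, map_mul, map_pow, eval_C, eval_X,
      Matrix.cons_val_zero, Matrix.cons_val_one, Matrix.cons_val_fin_one, one_pow, mul_one,
      mul_zero, add_zero, zero_add, ne_eq, OfNat.ofNat_ne_zero, not_false_eq_true,
      zero_pow] at h10 h01 h11
    refine ⟨h10, mul_left_cancel₀ (two_ne_zero (α := K)) ?_, h01⟩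
    linear_combination h11 - h10 - h01
  · rintro ⟨rfl, rfl, rfl⟩
    simp only [quadForm, linForm, map_mul, map_pow, map_ofNat]
    ring

lemma exists_eq_of_linForm_sq_dvd_quadForm {A B D b c : K} (hbc : ¬(b = 0 ∧ c = 0))
    (hdvd : linForm b c ^ 2 ∣ quadForm A B D) :
    ∃ l, A = l * b ^ 2 ∧ B = l * (b * c) ∧ D = l * c ^ 2 := by
  obtain ⟨l, hl⟩ := exists_eq_C_mul_of_dvd_of_totalDegree_le
    (pow_ne_zero 2 (linForm_ne_zero hbc)) hdvd
    ((totalDegree_quadForm_le A B D).trans (totalDegree_linForm_sq hbc).ge)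
  exact ⟨l, quadForm_eq_C_mul_linForm_sq_iff.mp hl⟩

lemma exists_quadForm_eq_C_mul_linForm_sq {A B D : K} (hdisc : B ^ 2 = A * D) :
    ∃ b c l : K, ¬(b = 0 ∧ c = 0) ∧ quadForm A B D = C l * linForm b c ^ 2 := by
  rcases eq_or_ne A 0 with rfl | hA
  · refine ⟨0, 1, D, by simp, quadForm_eq_C_mul_linForm_sq_iff.mpr ⟨by ring, ?_, by ring⟩⟩
    simpa using hdisc
  · refine ⟨A, B, A⁻¹, fun h => hA h.1, quadForm_eq_C_mul_linForm_sq_iff.mpr ⟨?_, ?_, ?_⟩⟩ <;>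
      field_simp
    linear_combination -hdisc

lemma exists_common_linForm_sq {A B D A' B' D' : K}
    (hdisc : B ^ 2 = A * D) (hdisc' : B' ^ 2 = A' * D')
    (hAB : A * B' = B * A') (hAD : A * D' = D * A') (hBD : B * D' = D * B') :
    ∃ b c l m : K, ¬(b = 0 ∧ c = 0) ∧
      quadForm A B D = C l * linForm b c ^ 2 ∧ quadForm A' B' D' = C m * linForm b c ^ 2 := by
  by_cases hu : ![A, B, D] = 0
  · obtain ⟨b, c, m, hbc, hq⟩ := exists_quadForm_eq_C_mul_linForm_sq hdisc'
    have hA : A = 0 := congrFun hu 0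
    have hB : B = 0 := congrFun hu 1
    have hD : D = 0 := congrFun hu 2
    exact ⟨b, c, 0, m, hbc, quadForm_eq_C_mul_linForm_sq_iff.mpr (by simp [hA, hB, hD]), hq⟩
  obtain ⟨t, ht⟩ := exists_eq_smul_of_mul_comm (w := ![A', B', D']) hu (by
    intro i j
    fin_cases i <;> fin_cases j <;> simp [hAB, hAD, hBD])
  obtain ⟨b, c, l, hbc, hp⟩ := exists_quadForm_eq_C_mul_linForm_sq hdisc
  obtain ⟨hA, hB, hD⟩ := quadForm_eq_C_mul_linForm_sq_iff.mp hp
  refine ⟨b, c, l, t * l, hbc, hp, quadForm_eq_C_mul_linForm_sq_iff.mpr ⟨?_, ?_, ?_⟩⟩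
  · simpa [hA, mul_assoc] using congrFun ht 0
  · simpa [hB, mul_assoc] using congrFun ht 1
  · simpa [hD, mul_assoc] using congrFun ht 2

end Field

lemma isGcdOf_C_mul_C_mul (d : MvPolynomial (Fin 2) ℂ) {l m : ℂ} (hlm : ¬(l = 0 ∧ m = 0)) :
    IsGcdOf d (C l * d) (C m * d) := by
  refine ⟨dvd_mul_left _ _, dvd_mul_left _ _, fun e hel hem => ?_⟩
  rcases eq_or_ne l 0 with rfl | hl
  · have hm : m ≠ 0 := fun hm => hlm ⟨rfl, hm⟩
    exact ((isUnit_iff_ne_zero.mpr hm).map C).dvd_mul_left.mp hem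
  · exact ((isUnit_iff_ne_zero.mpr hl).map C).dvd_mul_left.mp hel

lemma mu0f_Kf_Hf_eq_zero_of_linForm_sq_dvd (a : Fin 12 → ℝ) {b c : ℂ} (hbc : ¬(b = 0 ∧ c = 0))
    (hp : linForm b c ^ 2 ∣ p2C a) (hq : linForm b c ^ 2 ∣ q2C a) :
    mu0f a = 0 ∧ (∀ x y : ℝ, Kf a x y = 0) ∧ ∀ x y : ℝ, Hf a x y = 0 := by
  obtain ⟨l, h3, h4, h5⟩ := exists_eq_of_linForm_sq_dvd_quadForm hbc (p2C_eq_quadForm a ▸ hp)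
  obtain ⟨m, h9, h10, h11⟩ := exists_eq_of_linForm_sq_dvd_quadForm hbc (q2C_eq_quadForm a ▸ hq)
  refine ⟨?_, fun x y => ?_, fun x y => ?_⟩ <;> apply Complex.ofReal_injective
  · push_cast [mu0f, h3, h4, h5, h9, h10, h11]; ring
  · push_cast [Kf, h3, h4, h5, h9, h10, h11]; ring
  · push_cast [Hf, h3, h4, h5, h9, h10, h11]; ring

lemma exists_isGcdOf_of_Kf_Hf_eq_zero (a : Fin 12 → ℝ) (h : ¬(p2C a = 0 ∧ q2C a = 0))
    (hK : ∀ x y : ℝ, Kf a x y = 0) (hH : ∀ x y : ℝ, Hf a x y = 0) :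
    ∃ b c : ℂ, ¬(b = 0 ∧ c = 0) ∧ IsGcdOf (linForm b c ^ 2) (p2C a) (q2C a) := by
  have k10 := hK 1 0
  have k01 := hK 0 1
  have k11 := hK 1 1
  have h10 := hH 1 0
  have h01 := hH 0 1
  simp only [Kf, Hf] at k10 k01 k11 h10 h01
  have hdisc : a 4 ^ 2 = a 3 * a 5 := by linear_combination -h01 / 4
  have hdisc' : a 10 ^ 2 = a 9 * a 11 := by linear_combination -h10 / 4
  have hAB : a 3 * a 10 = a 4 * a 9 := by linear_combination k10 / 4
  have hAD : a 3 * a 11 = a 5 * a 9 := by linear_combination (k11 - k10 - k01) / 4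
  have hBD : a 4 * a 11 = a 5 * a 10 := by linear_combination k01 / 4
  obtain ⟨b, c, l, m, hbc, hp, hq⟩ := exists_common_linForm_sq
    (A := (a 3 : ℂ)) (B := a 4) (D := a 5) (A' := a 9) (B' := a 10) (D' := a 11)
    (by exact_mod_cast hdisc) (by exact_mod_cast hdisc') (by exact_mod_cast hAB)
    (by exact_mod_cast hAD) (by exact_mod_cast hBD)
  rw [← p2C_eq_quadForm] at hp
  rw [← q2C_eq_quadForm] at hq
  refine ⟨b, c, hbc, hp ▸ hq ▸ isGcdOf_C_mul_C_mul _ ?_⟩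
  rintro ⟨rfl, rfl⟩
  exact h ⟨by simpa using hp, by simpa using hq⟩

/-- For a quadratic system with `(p₂,q₂) ≠ (0,0)`, the gcd of `p₂` and `q₂`
in `ℂ[x,y]` is the square `(b·x+c·y)²` of a linear form iff `μ₀(a) = 0`, `K ≡ 0` and `H ≡ 0`. -/
theorem gcd_square_linear_iff (a : Fin 12 → ℝ) (h : ¬(p2C a = 0 ∧ q2C a = 0)) :
    (∃ b c : ℂ, ¬(b = 0 ∧ c = 0) ∧
        IsGcdOf ((C b * X 0 + C c * X 1) ^ 2) (p2C a) (q2C a)) ↔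
      (mu0f a = 0 ∧ (∀ x y : ℝ, Kf a x y = 0) ∧ ∀ x y : ℝ, Hf a x y = 0) :=
  ⟨fun ⟨_, _, hbc, hp, hq, _⟩ => mu0f_Kf_Hf_eq_zero_of_linForm_sq_dvd a hbc hp hq,
    fun ⟨_, hK, hH⟩ => exists_isGcdOf_of_Kf_Hf_eq_zero a h hK hH⟩

end QSinf
end
end

section
/- For every a ∈ ℝ^12, writing K(a,x,y) = A·x² + B·x·y + C·y², the resultant of p2 and q2 regarded as quadratic polynomials in x with coefficients in ℝ[y] equals ((B² − 4·A·C)/16)·y⁴; equivalently, 16·μ0(a) equals the discriminant B² − 4·A·C of the binary quadratic form K(a,x,y). -/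
open MvPolynomial Finset

noncomputable section

namespace QSinf

/-- Writing `K = A·x² + B·xy + C·y²`, the resultant of `p₂` and `q₂`
(as quadratics in `x` with coefficients in `ℝ[y]`, computed as the Sylvester determinant)
equals `((B²-4AC)/16)·y⁴`; equivalently `16·μ₀(a) = B² - 4AC`. -/
theorem resultant_p2_q2_eq (a : Fin 12 → ℝ) (A B Cc : ℝ)
    (hK : ∀ x y : ℝ, Kf a x y = A * x ^ 2 + B * x * y + Cc * y ^ 2) :
    (∀ y : ℝ,
      Matrix.det !![a 3, 2 * a 4 * y, a 5 * y ^ 2, (0 : ℝ);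
                    0, a 3, 2 * a 4 * y, a 5 * y ^ 2;
                    a 9, 2 * a 10 * y, a 11 * y ^ 2, 0;
                    0, a 9, 2 * a 10 * y, a 11 * y ^ 2]
        = ((B ^ 2 - 4 * A * Cc) / 16) * y ^ 4) ∧
    16 * mu0f a = B ^ 2 - 4 * A * Cc := by
  have h1 := hK 1 0
  have h2 := hK 0 1
  have h3 := hK 1 1
  simp only [Kf] at h1 h2 h3
  have hA : A = 4 * a 3 * a 10 - 4 * a 4 * a 9 := by linarith
  have hC : Cc = 4 * a 4 * a 11 - 4 * a 5 * a 10 := by linarith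
  have hB : B = 4 * a 3 * a 11 - 4 * a 5 * a 9 := by nlinarith [h3]
  constructor
  · intro y
    simp [Matrix.det_succ_row_zero, Fin.sum_univ_succ, Fin.succAbove]
    subst hA hB hC
    ring
  · subst hA hB hC
    simp only [mu0f]
    ring
end QSinf
end
end

section
/- Every real binary cubic form C(x,y) that is not identically zero can be brought by an invertible real linear change of variables to one of the four forms x·y·(x−y), x·(x²+y²), x²·y, x³; i.e., there exists an invertible linear map T: ℝ² → ℝ² such that C∘T equals one of these four binary cubic forms. -/
open MvPolynomial Finset

noncomputable section

namespace QSinf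

def cubf (d0 d1 d2 d3 x y : ℝ) : ℝ :=
  d0 * x ^ 3 + d1 * x ^ 2 * y + d2 * x * y ^ 2 + d3 * y ^ 3

/-- auxiliary: the cubic can be brought to a canonical form -/
def GoodCub (d0 d1 d2 d3 : ℝ) : Prop :=
  ∃ t11 t12 t21 t22 : ℝ, t11 * t22 - t12 * t21 ≠ 0 ∧
    ((∀ u v : ℝ, cubf d0 d1 d2 d3 (t11*u + t12*v) (t21*u + t22*v) = u * v * (u - v)) ∨
     (∀ u v : ℝ, cubf d0 d1 d2 d3 (t11*u + t12*v) (t21*u + t22*v) = u * (u ^ 2 + v ^ 2)) ∨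
     (∀ u v : ℝ, cubf d0 d1 d2 d3 (t11*u + t12*v) (t21*u + t22*v) = u ^ 2 * v) ∨
     (∀ u v : ℝ, cubf d0 d1 d2 d3 (t11*u + t12*v) (t21*u + t22*v) = u ^ 3))

lemma exists_cbrt (a : ℝ) : ∃ x : ℝ, x ^ 3 = a := by
  rcases le_or_gt 0 a with h | h
  · refine ⟨a ^ ((1:ℝ)/3), ?_⟩
    rw [← Real.rpow_natCast (a ^ ((1:ℝ)/3)) 3, ← Real.rpow_mul h]
    norm_num
  · obtain ⟨x, hx⟩ : ∃ x : ℝ, x ^ 3 = -a := by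
      refine ⟨(-a) ^ ((1:ℝ)/3), ?_⟩
      rw [← Real.rpow_natCast ((-a) ^ ((1:ℝ)/3)) 3, ← Real.rpow_mul (by linarith)]
      norm_num
    exact ⟨-x, by rw [neg_pow]; rw [hx]; ring⟩

lemma good_of_subst (d0 d1 d2 d3 e0 e1 e2 e3 s11 s12 s21 s22 : ℝ)
    (hs : s11 * s22 - s12 * s21 ≠ 0)
    (he : ∀ x y : ℝ, cubf d0 d1 d2 d3 (s11*x + s12*y) (s21*x + s22*y) = cubf e0 e1 e2 e3 x y)
    (hg : GoodCub e0 e1 e2 e3) : GoodCub d0 d1 d2 d3 := by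
  obtain ⟨t11, t12, t21, t22, hdet, hc⟩ := hg
  refine ⟨s11*t11 + s12*t21, s11*t12 + s12*t22, s21*t11 + s22*t21, s21*t12 + s22*t22, ?_, ?_⟩
  · have : (s11*t11 + s12*t21) * (s21*t12 + s22*t22) - (s11*t12 + s12*t22) * (s21*t11 + s22*t21)
        = (s11 * s22 - s12 * s21) * (t11 * t22 - t12 * t21) := by ring
    rw [this]; exact mul_ne_zero hs hdet
  · have key : ∀ u v : ℝ,
        cubf d0 d1 d2 d3 ((s11*t11 + s12*t21)*u + (s11*t12 + s12*t22)*v)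
          ((s21*t11 + s22*t21)*u + (s21*t12 + s22*t22)*v)
        = cubf e0 e1 e2 e3 (t11*u + t12*v) (t21*u + t22*v) := by
      intro u v
      have h1 := he (t11*u + t12*v) (t21*u + t22*v)
      simp only [cubf] at h1 ⊢
      linear_combination h1
    rcases hc with h | h | h | h
    · exact Or.inl fun u v => (key u v).trans (h u v)
    · exact Or.inr (Or.inl fun u v => (key u v).trans (h u v))
    · exact Or.inr (Or.inr (Or.inl fun u v => (key u v).trans (h u v)))
    · exact Or.inr (Or.inr (Or.inr fun u v => (key u v).trans (h u v)))

lemma good_monic (e1 e2 : ℝ) : GoodCub 1 e1 e2 0 := by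
  by_cases h2 : e2 = 0
  · subst h2
    by_cases h1 : e1 = 0
    · subst h1
      exact ⟨1, 0, 0, 1, by norm_num, Or.inr (Or.inr (Or.inr (fun u v => by
        simp only [cubf]; ring)))⟩
    · refine ⟨1, 0, -1/e1, 1/e1, by simpa using h1, Or.inr (Or.inr (Or.inl (fun u v => ?_)))⟩
      simp only [cubf]; field_simp; ring
  · rcases lt_trichotomy (e1^2 - 4*e2) 0 with hD | hD | hD
    · -- complex pair case: u(u²+v²)
      have he2pos : 0 < e2 := by nlinarith
      obtain ⟨α, hα3⟩ := exists_cbrt ((e2 - e1^2/4) / e2)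
      have hα3pos : 0 < α^3 := by
        rw [hα3]; exact div_pos (by nlinarith) he2pos
      have hαpos : 0 < α := by
        by_contra hle; push_neg at hle; nlinarith [sq_nonneg α]
      set β := Real.sqrt α⁻¹ with hβdef
      have hβ2 : β^2 = α⁻¹ := Real.sq_sqrt (by positivity)
      have hβpos : 0 < β := Real.sqrt_pos.2 (by positivity)
      set m := Real.sqrt e2 with hmdef
      have hm2 : m^2 = e2 := Real.sq_sqrt he2pos.le
      have hmpos : 0 < m := Real.sqrt_pos.2 he2pos
      refine ⟨1/α, 0, -(e1/2)/(α*e2), 1/(β*m), ?_, Or.inr (Or.inl (fun u v => ?_))⟩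
      · have : (1/α) * (1/(β*m)) - 0 * (-(e1/2)/(α*e2)) = 1/(α*β*m) := by field_simp; ring
        rw [this]; positivity
      · simp only [cubf]
        have hαβ : α * β^2 = 1 := by rw [hβ2]; field_simp
        have hc' : 4 * (α^3 * e2) = 4*e2 - e1^2 := by rw [hα3]; field_simp
        field_simp
        linear_combination (-8*u*v^2*e2^3*α^2*β*m^3) * hαβ + (-2*u^3*e2^2*β^3*m^3) * hc'
          + (-8*u*v^2*e2^3*α^2*β*m) * hm2
    · -- double root: u² v
      have h1 : e1 ≠ 0 := by intro h; apply h2; rw [h] at hD; nlinarith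
      refine ⟨0, 1, 2/e1, -2/e1, ?_, Or.inr (Or.inr (Or.inl (fun u v => ?_)))⟩
      · simp only [zero_mul, mul_div_assoc]; intro h; apply h1; field_simp at h; linarith
      · simp only [cubf]
        have he2 : e2 = e1^2/4 := by linarith
        subst he2; field_simp; ring
    · -- three distinct real roots: uv(u-v)
      have hDpos : (0:ℝ) < e1^2 - 4*e2 := hD
      set s := Real.sqrt (e1^2 - 4*e2) with hsdef
      have hs2 : s^2 = e1^2 - 4*e2 := Real.sq_sqrt hDpos.le
      have hspos : 0 < s := Real.sqrt_pos.2 hDpos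
      set r1 := (-e1 + s)/2 with hr1def
      set r2 := (-e1 - s)/2 with hr2def
      have hsum : r1 + r2 = -e1 := by rw [hr1def, hr2def]; ring
      have hprod : r1 * r2 = e2 := by
        rw [hr1def, hr2def]; nlinarith [hs2]
      have hdiff : r1 - r2 = s := by rw [hr1def, hr2def]; ring
      have hr1 : r1 ≠ 0 := fun h => h2 (by rw [← hprod, h]; ring)
      have hr2 : r2 ≠ 0 := fun h => h2 (by rw [← hprod, h]; ring)
      obtain ⟨a, ha3⟩ := exists_cbrt (-(r1*r2)/(r1-r2)^2)
      have ha : a ≠ 0 := by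
        intro h; rw [h] at ha3
        have : -(r1*r2)/(r1-r2)^2 = 0 := by rw [← ha3]; ring
        rw [div_eq_zero_iff] at this
        rcases this with h' | h'
        · exact h2 (by rw [← hprod]; linarith)
        · exact (by rw [hdiff] at h'; exact (pow_ne_zero 2 hspos.ne') h')
      have hdne : r1 - r2 ≠ 0 := by rw [hdiff]; exact hspos.ne'
      have ha3' : a^3 * (r1-r2)^2 = -(r1*r2) := by
        rw [ha3]; field_simp
      refine ⟨a, 0, a/r1, a*(r1-r2)/(r1*r2), ?_, Or.inl (fun u v => ?_)⟩
      · have : a * (a*(r1-r2)/(r1*r2)) - 0 * (a/r1) = a^2*(r1-r2)/(r1*r2) := by field_simp; ring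
        rw [this, hdiff]
        have := pow_ne_zero 2 ha
        intro h; rw [div_eq_zero_iff] at h
        rcases h with h' | h'
        · rcases mul_eq_zero.1 h' with h'' | h''
          · exact this h''
          · exact hspos.ne' h''
        · exact h2 (by rw [← hprod]; linarith [h'])
      · simp only [cubf]
        clear hsdef hr1def hr2def
        clear_value s r1 r2
        field_simp
        linear_combination (-u*v*(u-v)*r1^2*r2^2) * ha3'
          + (a^3*u^2*r1^2*r2^2*(u*r2 + v*(r1-r2))) * hsum
          + (-a^3*u*r1*r2*(u*r2 + v*(r1-r2))^2) * hprod

lemma exists_cubic_root (b c d : ℝ) : ∃ r : ℝ, r^3 + b*r^2 + c*r + d = 0 := by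
  set M : ℝ := 1 + |b| + |c| + |d| with hM
  have hM1 : 1 ≤ M := by rw [hM]; linarith [abs_nonneg b, abs_nonneg c, abs_nonneg d]
  have hb := abs_nonneg b
  have hc := abs_nonneg c
  have hd := abs_nonneg d
  have hble := le_abs_self b
  have hbge := neg_abs_le b
  have hcle := le_abs_self c
  have hcge := neg_abs_le c
  have hdle := le_abs_self d
  have hdge := neg_abs_le d
  have hcont : Continuous (fun x : ℝ => x^3 + b*x^2 + c*x + d) := by continuity
  have hle : -M ≤ M := by linarith
  have hivt := intermediate_value_Icc hle hcont.continuousOn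
  have h0 : (0:ℝ) ∈ Set.Icc ((-M)^3 + b*(-M)^2 + c*(-M) + d) (M^3 + b*M^2 + c*M + d) := by
    constructor
    · nlinarith [sq_nonneg M, sq_nonneg (M-1)]
    · nlinarith [sq_nonneg M, sq_nonneg (M-1)]
  obtain ⟨r, _, hr⟩ := hivt h0
  exact ⟨r, hr⟩

lemma exists_shear (d0 d1 d2 d3 : ℝ) (hC : ¬(d0 = 0 ∧ d1 = 0 ∧ d2 = 0 ∧ d3 = 0)) :
    ∃ c : ℝ, d0 + d1*c + d2*c^2 + d3*c^3 ≠ 0 := by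
  by_contra h'
  push_neg at h'
  apply hC
  have h0 := h' 0
  have h1 := h' 1
  have h2 := h' 2
  have h3 := h' 3
  norm_num at h0 h1 h2 h3
  refine ⟨by linarith, by linarith, by linarith, by linarith⟩

lemma goodcub_all (d0 d1 d2 d3 : ℝ) (hC : ¬(d0 = 0 ∧ d1 = 0 ∧ d2 = 0 ∧ d3 = 0)) :
    GoodCub d0 d1 d2 d3 := by
  obtain ⟨c, hc0⟩ := exists_shear d0 d1 d2 d3 hC
  apply good_of_subst d0 d1 d2 d3 (d0 + d1*c + d2*c^2 + d3*c^3) (d1 + 2*d2*c + 3*d3*c^2)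
    (d2 + 3*d3*c) d3 1 0 c 1 (by norm_num)
    (fun x y => by simp only [cubf]; ring)
  set k := d0 + d1*c + d2*c^2 + d3*c^3 with hk
  obtain ⟨l, hl⟩ := exists_cbrt k⁻¹
  have hl0 : l ≠ 0 := by
    intro h; rw [h] at hl
    apply hc0
    have : k⁻¹ = 0 := by rw [← hl]; ring
    exact inv_eq_zero.mp this
  have hkl : k * l^3 = 1 := by rw [hl]; exact mul_inv_cancel₀ hc0
  apply good_of_subst _ _ _ _ 1 ((d1 + 2*d2*c + 3*d3*c^2)*l^3) ((d2 + 3*d3*c)*l^3) (d3*l^3)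
    l 0 0 l (by simpa using pow_ne_zero 2 hl0)
    (fun x y => by simp only [cubf]; linear_combination (x^3) * hkl)
  set b1 := (d1 + 2*d2*c + 3*d3*c^2)*l^3
  set b2 := (d2 + 3*d3*c)*l^3
  set b3 := d3*l^3
  obtain ⟨r, hr⟩ := exists_cubic_root b1 b2 b3
  exact good_of_subst _ _ _ _ 1 (b1 + 3*r) (b2 + 2*b1*r + 3*r^2) 0 1 r 0 1 (by norm_num)
    (fun x y => by simp only [cubf]; linear_combination (y^3) * hr)
    (good_monic _ _)

/-- Every nonzero real binary cubic form can be brought by an invertible real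
linear change of variables to one of `xy(x-y)`, `x(x²+y²)`, `x²y`, `x³`. -/
theorem binary_cubic_canonical_forms (d0 d1 d2 d3 : ℝ)
    (hC : ¬(d0 = 0 ∧ d1 = 0 ∧ d2 = 0 ∧ d3 = 0)) :
    ∃ t11 t12 t21 t22 : ℝ, t11 * t22 - t12 * t21 ≠ 0 ∧
      ((∀ u v : ℝ,
          d0 * (t11*u + t12*v) ^ 3 + d1 * (t11*u + t12*v) ^ 2 * (t21*u + t22*v)
            + d2 * (t11*u + t12*v) * (t21*u + t22*v) ^ 2 + d3 * (t21*u + t22*v) ^ 3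
          = u * v * (u - v)) ∨
       (∀ u v : ℝ,
          d0 * (t11*u + t12*v) ^ 3 + d1 * (t11*u + t12*v) ^ 2 * (t21*u + t22*v)
            + d2 * (t11*u + t12*v) * (t21*u + t22*v) ^ 2 + d3 * (t21*u + t22*v) ^ 3
          = u * (u ^ 2 + v ^ 2)) ∨
       (∀ u v : ℝ,
          d0 * (t11*u + t12*v) ^ 3 + d1 * (t11*u + t12*v) ^ 2 * (t21*u + t22*v)
            + d2 * (t11*u + t12*v) * (t21*u + t22*v) ^ 2 + d3 * (t21*u + t22*v) ^ 3
          = u ^ 2 * v) ∨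
       (∀ u v : ℝ,
          d0 * (t11*u + t12*v) ^ 3 + d1 * (t11*u + t12*v) ^ 2 * (t21*u + t22*v)
            + d2 * (t11*u + t12*v) * (t21*u + t22*v) ^ 2 + d3 * (t21*u + t22*v) ^ 3
          = u ^ 3)) := by
  obtain ⟨t11, t12, t21, t22, hd, hc⟩ := goodcub_all d0 d1 d2 d3 hC
  refine ⟨t11, t12, t21, t22, hd, ?_⟩
  simpa only [cubf] using hc
end QSinf
end
end
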